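/- Suppose α, β ∈ ℤ² both satisfy the genus-1 condition. Then some composition of the maps s₁, s₂, s₃ takes the pair (α,β) to a pair (α',β') for which one of the following holds, for some x, y ∈ ℤ: (i) α' = (0,x) and β' = (0,y); (ii) α' = (0,x) and β' = (y,0); (iii) α' = (1,x) and β' = (0,y); (iv) α' = (1,x) and β' = (y,0); (v) α' = (1,x) and β' = (1,y) or β' = (−1,y); (vi) α' = (1,x) and β' = (y,1) or β' = (y,−1); (vii) α' ∈ {(2,2),(2,−2)} and β' = (0,y); (viii) α' ∈ {(2,2),(2,−2)} and β' = (1,y) or β' = (−1,y); (ix) α' ∈ {(2,2),(2,−2)} and β' ∈ {(2,2),(2,−2),(−2,2),(−2,−2)}. -/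
import Mathlib


/-- Swapping the two coordinates of a vector in `ℤ²`. -/
def swap (v : ℤ × ℤ) : ℤ × ℤ := (v.2, v.1)

/-- The genus-1 condition: `v` is represented by a smoothly embedded closed
orientable surface of genus at most 1 in `S² × S²` (Ruberman). -/
def genus1 (v : ℤ × ℤ) : Prop :=
  min |v.1| |v.2| ≤ 1 ∨ (|v.1| = 2 ∧ |v.2| = 2)

/-- Swapping the two `S²` factors of `S² × S²`. -/
def s₁ (p : (ℤ × ℤ) × (ℤ × ℤ)) : (ℤ × ℤ) × (ℤ × ℤ) := (swap p.1, swap p.2)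

/-- Inverting both `S²` factors of `S² × S²`. -/
def s₂ (p : (ℤ × ℤ) × (ℤ × ℤ)) : (ℤ × ℤ) × (ℤ × ℤ) := (-p.1, -p.2)

/-- Swapping the two link components. -/
def s₃ (p : (ℤ × ℤ) × (ℤ × ℤ)) : (ℤ × ℤ) × (ℤ × ℤ) := (p.2, p.1)

def T (q : (ℤ × ℤ) × (ℤ × ℤ)) : Prop :=
  ∃ x y : ℤ,
    (q.1 = (0, x) ∧ q.2 = (0, y)) ∨
    (q.1 = (0, x) ∧ q.2 = (y, 0)) ∨
    (q.1 = (1, x) ∧ q.2 = (0, y)) ∨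
    (q.1 = (1, x) ∧ q.2 = (y, 0)) ∨
    (q.1 = (1, x) ∧ (q.2 = (1, y) ∨ q.2 = (-1, y))) ∨
    (q.1 = (1, x) ∧ (q.2 = (y, 1) ∨ q.2 = (y, -1))) ∨
    ((q.1 = (2, 2) ∨ q.1 = (2, -2)) ∧ q.2 = (0, y)) ∨
    ((q.1 = (2, 2) ∨ q.1 = (2, -2)) ∧ (q.2 = (1, y) ∨ q.2 = (-1, y))) ∨
    ((q.1 = (2, 2) ∨ q.1 = (2, -2)) ∧
      (q.2 = (2, 2) ∨ q.2 = (2, -2) ∨ q.2 = (-2, 2) ∨ q.2 = (-2, -2)))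

def P (α β : ℤ × ℤ) : Prop :=
  ∃ L : List ((ℤ × ℤ) × (ℤ × ℤ) → (ℤ × ℤ) × (ℤ × ℤ)),
    (∀ f ∈ L, f = s₁ ∨ f = s₂ ∨ f = s₃) ∧ T (L.foldr (· ∘ ·) id (α, β))

lemma P_of_T {α β : ℤ × ℤ} (h : T (α, β)) : P α β :=
  ⟨[], by simp, by simpa⟩

lemma foldr_comp_append {A : Type*} (L : List (A → A)) (g : A → A) (p : A) :
    (L ++ [g]).foldr (· ∘ ·) id p = L.foldr (· ∘ ·) id (g p) := by
  induction L with
  | nil => rfl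
  | cons f L ih => simp [List.foldr_cons, Function.comp, ih]

lemma P_step {α β : ℤ × ℤ} (g : _) (hg : g = s₁ ∨ g = s₂ ∨ g = s₃)
    (h : P (g (α, β)).1 (g (α, β)).2) : P α β := by
  obtain ⟨L, h1, h2⟩ := h
  refine ⟨L ++ [g], ?_, ?_⟩
  · intro f hf
    rcases List.mem_append.1 hf with hf | hf
    · exact h1 f hf
    · simp at hf; subst hf; exact hg
  · simpa [foldr_comp_append] using h2

lemma P_s1 {α β : ℤ × ℤ} (h : P (swap α) (swap β)) : P α β :=
  P_step s₁ (Or.inl rfl) h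

lemma P_s2 {α β : ℤ × ℤ} (h : P (-α) (-β)) : P α β :=
  P_step s₂ (Or.inr (Or.inl rfl)) h

lemma P_s3 {α β : ℤ × ℤ} (h : P β α) : P α β :=
  P_step s₃ (Or.inr (Or.inr rfl)) h
lemma T1 (x y : ℤ) : T ((0, x), (0, y)) := ⟨x, y, Or.inl ⟨rfl, rfl⟩⟩
lemma T2 (x y : ℤ) : T ((0, x), (y, 0)) := ⟨x, y, by tauto⟩
lemma T3 (x y : ℤ) : T ((1, x), (0, y)) := ⟨x, y, by tauto⟩
lemma T4 (x y : ℤ) : T ((1, x), (y, 0)) := ⟨x, y, by tauto⟩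
lemma T5 (x y : ℤ) : T ((1, x), (1, y)) := ⟨x, y, by tauto⟩
lemma T5' (x y : ℤ) : T ((1, x), (-1, y)) := ⟨x, y, by tauto⟩
lemma T6 (x y : ℤ) : T ((1, x), (y, 1)) := ⟨x, y, by tauto⟩
lemma T6' (x y : ℤ) : T ((1, x), (y, -1)) := ⟨x, y, by tauto⟩
lemma T7 (b y : ℤ) (hb : b = 2 ∨ b = -2) : T ((2, b), (0, y)) := by
  refine ⟨0, y, ?_⟩
  rcases hb with rfl | rfl <;> tauto
lemma T8 (b c y : ℤ) (hb : b = 2 ∨ b = -2) (hc : c = 1 ∨ c = -1) :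
    T ((2, b), (c, y)) := by
  have h1 : ((2:ℤ), b) = (2, 2) ∨ ((2:ℤ), b) = (2, -2) := by
    rcases hb with rfl | rfl
    exacts [Or.inl rfl, Or.inr rfl]
  have h2 : ((c:ℤ), y) = (1, y) ∨ ((c:ℤ), y) = (-1, y) := by
    rcases hc with rfl | rfl
    exacts [Or.inl rfl, Or.inr rfl]
  exact ⟨0, y, Or.inr (Or.inr (Or.inr (Or.inr (Or.inr (Or.inr (Or.inr
    (Or.inl ⟨h1, h2⟩)))))))⟩
lemma T9 (b c d : ℤ) (hb : b = 2 ∨ b = -2) (hc : c = 2 ∨ c = -2)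
    (hd : d = 2 ∨ d = -2) : T ((2, b), (c, d)) := by
  have h1 : ((2:ℤ), b) = (2, 2) ∨ ((2:ℤ), b) = (2, -2) := by
    rcases hb with rfl | rfl
    exacts [Or.inl rfl, Or.inr rfl]
  have h2 : ((c:ℤ), d) = (2, 2) ∨ (c, d) = ((2:ℤ), -2) ∨ (c, d) = ((-2:ℤ), 2) ∨
      (c, d) = ((-2:ℤ), -2) := by
    rcases hc with rfl | rfl <;> rcases hd with rfl | rfl
    exacts [Or.inl rfl, Or.inr (Or.inl rfl), Or.inr (Or.inr (Or.inl rfl)),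
      Or.inr (Or.inr (Or.inr rfl))]
  exact ⟨0, 0, Or.inr (Or.inr (Or.inr (Or.inr (Or.inr (Or.inr (Or.inr
    (Or.inr ⟨h1, h2⟩)))))))⟩

lemma genus1_neg {c d : ℤ} (h : genus1 (c, d)) : genus1 (-c, -d) := by
  simpa [genus1, abs_neg] using h

lemma L1 (e x c d : ℤ) (he : e = 0 ∨ e = 1) (hs : |c| ≤ 1 ∨ |d| ≤ 1) :
    P (e, x) (c, d) := by
  rcases hs with hc | hd
  · obtain ⟨h1, h2⟩ := abs_le.1 hc
    interval_cases c
    · rcases he with rfl | rfl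
      · apply P_s3; apply P_s2
        simp only [s₃, s₂, Prod.neg_mk, neg_neg, neg_zero]
        exact P_of_T (T3 (-d) (-x))
      · exact P_of_T (T5' x d)
    · rcases he with rfl | rfl
      · exact P_of_T (T1 x d)
      · exact P_of_T (T3 x d)
    · rcases he with rfl | rfl
      · apply P_s3; exact P_of_T (T3 d x)
      · exact P_of_T (T5 x d)
  · obtain ⟨h1, h2⟩ := abs_le.1 hd
    interval_cases d
    · rcases he with rfl | rfl
      · apply P_s1
        simp only [swap]
        apply P_s3; apply P_s2
        simp only [Prod.neg_mk, neg_neg, neg_zero]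
        exact P_of_T (T4 (-c) (-x))
      · exact P_of_T (T6' x c)
    · rcases he with rfl | rfl
      · exact P_of_T (T2 x c)
      · exact P_of_T (T4 x c)
    · rcases he with rfl | rfl
      · apply P_s1
        simp only [swap]
        apply P_s3
        exact P_of_T (T4 c x)
      · exact P_of_T (T6 x c)

lemma L2 (b c d : ℤ) (hb : b = 2 ∨ b = -2) (hβ : genus1 (c, d)) :
    P (2, b) (c, d) := by
  simp only [genus1, min_le_iff] at hβ
  rcases hβ with (hc | hd) | ⟨hc, hd⟩
  · obtain ⟨h1, h2⟩ := abs_le.1 hc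
    interval_cases c
    · exact P_of_T (T8 b (-1) d hb (Or.inr rfl))
    · exact P_of_T (T7 b d hb)
    · exact P_of_T (T8 b 1 d hb (Or.inl rfl))
  · apply P_s1
    simp only [swap]
    obtain ⟨h1, h2⟩ := abs_le.1 hd
    rcases hb with rfl | rfl
    · interval_cases d
      · exact P_of_T (T8 2 (-1) c (Or.inl rfl) (Or.inr rfl))
      · exact P_of_T (T7 2 c (Or.inl rfl))
      · exact P_of_T (T8 2 1 c (Or.inl rfl) (Or.inl rfl))
    · apply P_s2
      simp only [Prod.neg_mk, neg_neg]
      interval_cases d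
      · exact P_of_T (T8 (-2) 1 (-c) (Or.inr rfl) (Or.inl rfl))
      · exact P_of_T (T7 (-2) (-c) (Or.inr rfl))
      · exact P_of_T (T8 (-2) (-1) (-c) (Or.inr rfl) (Or.inr rfl))
  · rcases (abs_eq (by norm_num : (0:ℤ) ≤ 2)).1 hc with rfl | rfl <;>
      rcases (abs_eq (by norm_num : (0:ℤ) ≤ 2)).1 hd with rfl | rfl <;>
      exact P_of_T (T9 b _ _ hb (by norm_num) (by norm_num))

theorem stmt4' (α β : ℤ × ℤ) (hα : genus1 α) (hβ : genus1 β) : P α β := by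
  obtain ⟨a, b⟩ := α; obtain ⟨c, d⟩ := β
  simp only [genus1, min_le_iff] at hα
  rcases hα with hα | ⟨ha, hb⟩
  · -- α small
    simp only [genus1, min_le_iff] at hβ
    rcases hβ with hβ | ⟨hc, hd⟩
    · -- both small
      rcases hα with ha | hb
      · obtain ⟨h1, h2⟩ := abs_le.1 ha
        interval_cases a
        · apply P_s2
          simp only [Prod.neg_mk, neg_neg]
          exact L1 1 (-b) (-c) (-d) (Or.inr rfl) (by simpa [abs_neg] using hβ)
        · exact L1 0 b c d (Or.inl rfl) hβ
        · exact L1 1 b c d (Or.inr rfl) hβ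
      · apply P_s1
        simp only [swap]
        obtain ⟨h1, h2⟩ := abs_le.1 hb
        interval_cases b
        · apply P_s2
          simp only [Prod.neg_mk, neg_neg]
          exact L1 1 (-a) (-d) (-c) (Or.inr rfl) (by simpa [abs_neg] using hβ.symm)
        · exact L1 0 a d c (Or.inl rfl) hβ.symm
        · exact L1 1 a d c (Or.inr rfl) hβ.symm
    · -- β = (±2, ±2)
      apply P_s3
      have hg : genus1 (a, b) := Or.inl (min_le_iff.2 hα)
      rcases (abs_eq (by norm_num : (0:ℤ) ≤ 2)).1 hc with rfl | rfl
      · exact L2 d a b ((abs_eq (by norm_num)).1 hd) hg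
      · apply P_s2
        simp only [Prod.neg_mk, neg_neg]
        refine L2 (-d) (-a) (-b) ?_ (genus1_neg hg)
        rcases (abs_eq (by norm_num : (0:ℤ) ≤ 2)).1 hd with rfl | rfl
        · exact Or.inr rfl
        · exact Or.inl (by norm_num)
  · -- α = (±2, ±2)
    rcases (abs_eq (by norm_num : (0:ℤ) ≤ 2)).1 ha with rfl | rfl
    · exact L2 b c d ((abs_eq (by norm_num)).1 hb) hβ
    · apply P_s2
      simp only [Prod.neg_mk, neg_neg]
      refine L2 (-b) (-c) (-d) ?_ (genus1_neg hβ)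
      rcases (abs_eq (by norm_num : (0:ℤ) ≤ 2)).1 hb with rfl | rfl
      · exact Or.inr rfl
      · exact Or.inl (by norm_num)


theorem stmt4 (α β : ℤ × ℤ) (hα : genus1 α) (hβ : genus1 β) :
    ∃ L : List ((ℤ × ℤ) × (ℤ × ℤ) → (ℤ × ℤ) × (ℤ × ℤ)),
      (∀ f ∈ L, f = s₁ ∨ f = s₂ ∨ f = s₃) ∧
      ∃ α' β' : ℤ × ℤ, L.foldr (· ∘ ·) id (α, β) = (α', β') ∧
        (∃ x y : ℤ,
          (α' = (0, x) ∧ β' = (0, y)) ∨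
          (α' = (0, x) ∧ β' = (y, 0)) ∨
          (α' = (1, x) ∧ β' = (0, y)) ∨
          (α' = (1, x) ∧ β' = (y, 0)) ∨
          (α' = (1, x) ∧ (β' = (1, y) ∨ β' = (-1, y))) ∨
          (α' = (1, x) ∧ (β' = (y, 1) ∨ β' = (y, -1))) ∨
          ((α' = (2, 2) ∨ α' = (2, -2)) ∧ β' = (0, y)) ∨
          ((α' = (2, 2) ∨ α' = (2, -2)) ∧ (β' = (1, y) ∨ β' = (-1, y))) ∨
          ((α' = (2, 2) ∨ α' = (2, -2)) ∧
            (β' = (2, 2) ∨ β' = (2, -2) ∨ β' = (-2, 2) ∨ β' = (-2, -2)))) := by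
  obtain ⟨L, h1, h2⟩ := stmt4' α β hα hβ
  exact ⟨L, h1, _, _, rfl, h2⟩
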